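/- arXiv:1509.06989 — 2 statements merged into one kernel-verified Lean document; each statement's English description precedes it below -/
import Mathlib

section
/- In the symmetric SPRD algorithm (p = 1/2) with degree distribution F, the maximal edge length N at the origin is finite almost surely: P(N < ∞) = 1. -/
/-!
To the right of the origin the quantities `L i - R i`, `i ≥ 1`, are the i.i.d. steps of a random
walk whose law is symmetric, since given the degree the number of right-arrows is
`Binomial(D, 1/2)`; the `(j+1)`-st right-arrow of the origin is connected as soon as this walk
exceeds `j`, so it suffices that the walk is a.s. unbounded above (and likewise on the left).
Being bounded above is a tail event, so by Kolmogorov's 0-1 law it has probability 0 or 1, and by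
symmetry being bounded below has the same probability. Both cannot happen together: by the second
Borel–Cantelli lemma the walk a.s. makes runs of arbitrarily many consecutive positive steps.
If no step is positive with positive probability, then a.s. the origin has no arrows at all.
-/

open MeasureTheory ProbabilityTheory Filter Set
open scoped ENNReal

theorem iIndep_comap_eval_infinitePi {ι : Type*} {X : ι → Type*} [∀ i, MeasurableSpace (X i)]
    (μ : ∀ i, Measure (X i)) [∀ i, IsProbabilityMeasure (μ i)] :
    iIndep (fun i => MeasurableSpace.comap (fun x : ∀ i, X i => x i) inferInstance)
      (Measure.infinitePi μ) :=
  (iIndepFun_iff_iIndep _ _ _).1 (iIndepFun_infinitePi (X := fun _ => id) fun _ => measurable_id)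

section IIDSequence

variable {X : Type*} [MeasurableSpace X] {μ : Measure X} [IsProbabilityMeasure μ]

theorem ae_exists_mem_infinitePi {G : Set X} (hG : MeasurableSet G) (hμG : μ G ≠ 0) :
    ∀ᵐ x ∂(Measure.infinitePi fun _ : ℕ => μ), ∃ k, x k ∈ G := by
  have hmeas (k : ℕ) : MeasurableSet ((fun x : ℕ → X => x k) ⁻¹' G) := measurable_pi_apply k hG
  have hindep : iIndepSet (fun k => (fun x : ℕ → X => x k) ⁻¹' G)
      (Measure.infinitePi fun _ : ℕ => μ) :=
    (iIndepSet_iff_iIndep _ _).2 <| iIndep_of_iIndep_of_le (iIndep_comap_eval_infinitePi _)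
      fun k => MeasurableSpace.generateFrom_le fun s hs => hs ▸ ⟨G, hG, rfl⟩
  have hsum : ∑' k, Measure.infinitePi (fun _ : ℕ => μ) ((fun x : ℕ → X => x k) ⁻¹' G) = ∞ := by
    simp_rw [fun k => (measurePreserving_eval_infinitePi (fun _ : ℕ => μ) k).measure_preimage
      hG.nullMeasurableSet]
    exact ENNReal.tsum_const_eq_top_of_ne_zero hμG
  filter_upwards [(mem_ae_iff_prob_eq_one (.measurableSet_limsup hmeas)).2
    (measure_limsup_eq_one hmeas hindep hsum)] with x hx
  exact (mem_limsup_iff_frequently_mem.1 hx).exists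

theorem measurePreserving_blocks_infinitePi (m : ℕ) [NeZero m] :
    MeasurePreserving (fun (x : ℕ → X) k (j : Fin m) => x (k * m + j))
      (Measure.infinitePi fun _ => μ)
      (Measure.infinitePi fun _ : ℕ => Measure.infinitePi fun _ : Fin m => μ) := by
  have hcongr : MeasurePreserving (MeasurableEquiv.piCongrLeft (fun _ => X) (Nat.divModEquiv m))
      (Measure.infinitePi fun _ => μ) (Measure.infinitePi fun _ => μ) :=
    ⟨by fun_prop, Measure.infinitePi_map_piCongrLeft (fun _ => μ) _⟩
  have hcurry : MeasurePreserving (MeasurableEquiv.curry ℕ (Fin m) X)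
      (Measure.infinitePi fun _ => μ)
      (Measure.infinitePi fun _ : ℕ => Measure.infinitePi fun _ : Fin m => μ) :=
    ⟨by fun_prop, Measure.infinitePi_map_curry fun _ _ => μ⟩
  convert hcurry.comp hcongr using 1
  ext x k j
  simp [MeasurableEquiv.piCongrLeft, Equiv.piCongrLeft_apply_eq_cast]

theorem ae_exists_block_mem_infinitePi {G : Set X} (hG : MeasurableSet G) (hμG : μ G ≠ 0)
    (m : ℕ) [NeZero m] :
    ∀ᵐ x ∂(Measure.infinitePi fun _ : ℕ => μ), ∃ k, ∀ j : Fin m, x (k * m + j) ∈ G := by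
  have hblock : (Measure.infinitePi fun _ : Fin m => μ) (univ.pi fun _ => G) ≠ 0 := by
    rw [Measure.infinitePi_pi_univ _ fun _ => hG]
    simp [hμG, NeZero.ne]
  simpa using (measurePreserving_blocks_infinitePi m).quasiMeasurePreserving.ae
    (ae_exists_mem_infinitePi (.univ_pi fun _ => hG) hblock)

end IIDSequence

def partialSum (x : ℕ → ℤ) (n : ℕ) : ℤ := ∑ i ∈ Finset.range n, x i

theorem partialSum_add (x : ℕ → ℤ) (N n : ℕ) :
    partialSum x (N + n) = partialSum x N + partialSum (fun i => x (N + i)) n :=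
  Finset.sum_range_add x N n

theorem partialSum_neg (x : ℕ → ℤ) : partialSum (-x) = -partialSum x := by
  ext n
  simp [partialSum]

theorem le_partialSum_add_sub {x : ℕ → ℤ} {N m : ℕ} (hx : ∀ j : Fin m, 0 < x (N + j)) :
    (m : ℤ) ≤ partialSum x (N + m) - partialSum x N := by
  rw [partialSum_add, add_sub_cancel_left, partialSum, Finset.sum_range fun i => x (N + i)]
  simpa using Finset.card_nsmul_le_sum Finset.univ _ 1 fun j _ => Int.add_one_le_of_lt (hx j)

theorem bddAbove_range_partialSum_iff_shift (x : ℕ → ℤ) (N : ℕ) :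
    BddAbove (range (partialSum x)) ↔ BddAbove (range (partialSum fun i => x (N + i))) := by
  constructor
  · rintro ⟨b, hb⟩
    refine ⟨b - partialSum x N, forall_mem_range.2 fun n => ?_⟩
    have := hb (mem_range_self (N + n))
    rw [partialSum_add] at this
    linarith
  · rintro ⟨b, hb⟩
    have hsplit : range (partialSum x) ⊆
        partialSum x '' Iio N ∪ range fun n => partialSum x (N + n) := by
      rintro _ ⟨n, rfl⟩
      rcases lt_or_ge n N with hn | hn
      · exact .inl ⟨n, hn, rfl⟩
      · exact .inr ⟨n - N, by simp only [Nat.add_sub_cancel' hn]⟩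
    refine (((finite_Iio N).image _).bddAbove.union
      ⟨partialSum x N + b, forall_mem_range.2 fun n => ?_⟩).mono hsplit
    have : partialSum (fun i => x (N + i)) n ≤ b := hb (mem_range_self n)
    linarith [partialSum_add x N n]

theorem measurableSet_tail_bddAbove_range_partialSum :
    MeasurableSet[limsup (fun i => MeasurableSpace.comap (fun x : ℕ → ℤ => x i) inferInstance)
      atTop] {x | BddAbove (range (partialSum x))} := by
  rw [limsup_eq_iInf_iSup_of_nat, MeasurableSpace.measurableSet_iInf]
  intro N
  rw [show {x : ℕ → ℤ | BddAbove (range (partialSum x))} =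
      {x | BddAbove (range (partialSum fun i => x (N + i)))} from
    Set.ext fun x => bddAbove_range_partialSum_iff_shift x N]
  refine measurableSet_bddAbove_range fun n => Finset.measurable_sum _ fun i _ => ?_
  exact Measurable.of_comap_le <| le_iSup₂ (f := fun i (_ : i ≥ N) =>
    MeasurableSpace.comap (fun x : ℕ → ℤ => x i) inferInstance) (N + i) (Nat.le_add_right N i)

theorem measure_bddAbove_range_partialSum_eq_zero_or_one (ν : ℕ → Measure ℤ)
    [∀ i, IsProbabilityMeasure (ν i)] :
    Measure.infinitePi ν {x | BddAbove (range (partialSum x))} = 0 ∨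
      Measure.infinitePi ν {x | BddAbove (range (partialSum x))} = 1 :=
  measure_zero_or_one_of_measurableSet_limsup_atTop (fun i => (measurable_pi_apply i).comap_le)
    (iIndep_comap_eval_infinitePi ν) measurableSet_tail_bddAbove_range_partialSum

section SymmetricWalk

variable {ν : Measure ℤ} [IsProbabilityMeasure ν]

theorem ae_not_bddAbove_and_bddBelow_range_partialSum (hpos : ν (Ioi 0) ≠ 0) :
    ∀ᵐ x ∂(Measure.infinitePi fun _ : ℕ => ν),
      ¬ (BddAbove (range (partialSum x)) ∧ BddBelow (range (partialSum x))) := by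
  filter_upwards [ae_all_iff.2 fun m : ℕ =>
    ae_exists_block_mem_infinitePi measurableSet_Ioi hpos (m + 1)] with x hx
  rintro ⟨⟨a, ha⟩, ⟨b, hb⟩⟩
  -- a run of more than `a - b` positive steps does not fit between the bounds `b` and `a`
  obtain ⟨k, hk⟩ := hx (a - b).toNat
  have hrise := le_partialSum_add_sub hk
  have := ha (mem_range_self (k * ((a - b).toNat + 1) + ((a - b).toNat + 1)))
  have := hb (mem_range_self (k * ((a - b).toNat + 1)))
  omega

theorem ae_not_bddAbove_range_partialSum [ν.IsNegInvariant] (hpos : ν (Ioi 0) ≠ 0) :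
    ∀ᵐ x ∂(Measure.infinitePi fun _ : ℕ => ν), ¬ BddAbove (range (partialSum x)) := by
  set P := Measure.infinitePi fun _ : ℕ => ν
  have hmeas : ∀ n, Measurable fun x : ℕ → ℤ => partialSum x n :=
    fun n => Finset.measurable_sum _ fun i _ => measurable_pi_apply i
  have hA : MeasurableSet {x | BddAbove (range (partialSum x))} :=
    measurableSet_bddAbove_range hmeas
  have hB : MeasurableSet {x | BddBelow (range (partialSum x))} :=
    measurableSet_bddBelow_range hmeas
  have hneg : MeasurePreserving (Neg.neg : (ℕ → ℤ) → ℕ → ℤ) P P :=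
    ⟨measurable_neg, by
      have := Measure.infinitePi_map_pi (fun _ : ℕ => ν) fun _ => measurable_neg
      rwa [Measure.map_neg_eq_self] at this⟩
  have hreflect :
      P {x | BddBelow (range (partialSum x))} = P {x | BddAbove (range (partialSum x))} := by
    rw [← hneg.measure_preimage hA.nullMeasurableSet]
    congr 1
    ext x
    show BddBelow (range (partialSum x)) ↔ BddAbove (range (partialSum (-x)))
    rw [partialSum_neg, show -partialSum x = Neg.neg ∘ partialSum x from rfl,
      range_comp, image_neg_eq_neg, bddAbove_neg]
  rcases measure_bddAbove_range_partialSum_eq_zero_or_one fun _ => ν with h0 | h1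
  · exact measure_eq_zero_iff_ae_notMem.1 h0
  · have hA1 : ∀ᵐ x ∂P, BddAbove (range (partialSum x)) := (mem_ae_iff_prob_eq_one hA).2 h1
    have hB1 : ∀ᵐ x ∂P, BddBelow (range (partialSum x)) :=
      (mem_ae_iff_prob_eq_one hB).2 (hreflect.trans h1)
    obtain ⟨x, hx, hxA, hxB⟩ :=
      ((ae_not_bddAbove_and_bddBelow_range_partialSum hpos).and (hA1.and hB1)).exists
    exact absurd ⟨hxA, hxB⟩ hx

theorem ProbabilityTheory.iIndepFun.ae_not_bddAbove_range_partialSum [ν.IsNegInvariant]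
    {Ω : Type*} [MeasurableSpace Ω] {P : Measure Ω} {Z : ℕ → Ω → ℤ} (hindep : iIndepFun Z P)
    (hlaw : ∀ i, HasLaw (Z i) ν P) (hpos : ν (Ioi 0) ≠ 0) :
    ∀ᵐ ω ∂P, ¬ BddAbove (range (partialSum fun i => Z i ω)) := by
  have hjoint :=
    hindep.hasLaw_infinitePi hlaw (aemeasurable_pi_iff.2 fun i => (hlaw i).aemeasurable)
  exact ae_of_ae_map hjoint.aemeasurable
    (hjoint.map_eq ▸ _root_.ae_not_bddAbove_range_partialSum hpos)

theorem ae_not_bddAbove_range_partialSum_comp [ν.IsNegInvariant] {Ω ι β : Type*}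
    [MeasurableSpace Ω] [MeasurableSpace β] {P : Measure Ω} {X : ι → Ω → β} {i₀ : ι}
    (hindep : iIndepFun X P) (hident : ∀ i, IdentDistrib (X i) (X i₀) P P) {u : β → ℤ}
    (hu : Measurable u) (hlaw : HasLaw (u ∘ X i₀) ν P) (hpos : ν (Ioi 0) ≠ 0) {g : ℕ → ι}
    (hg : g.Injective) :
    ∀ᵐ ω ∂P, ¬ BddAbove (range (partialSum fun i => u (X (g i) ω))) :=
  ((hindep.precomp hg).comp (fun _ => u) fun _ => hu).ae_not_bddAbove_range_partialSum
    (fun i => ⟨((hident (g i)).comp hu).aemeasurable_fst,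
      ((hident (g i)).comp hu).map_eq.trans hlaw.map_eq⟩) hpos

end SymmetricWalk

section Binomial

variable {Ω : Type*} [MeasurableSpace Ω] {P : Measure Ω} {X Y : Ω → ℕ}

theorem identDistrib_prodMk_swap_of_binomial (hXY : Measurable fun ω => (X ω, Y ω))
    (hbin : ∀ d r : ℕ, P {ω | X ω + Y ω = d ∧ Y ω = r}
      = P {ω | X ω + Y ω = d} * (d.choose r : ℝ≥0∞) * (2 : ℝ≥0∞)⁻¹ ^ d) :
    IdentDistrib (fun ω => (X ω, Y ω)) (fun ω => (Y ω, X ω)) P P where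
  aemeasurable_fst := hXY.aemeasurable
  aemeasurable_snd := (hXY.snd.prodMk hXY.fst).aemeasurable
  map_eq := by
    have hpair (l r : ℕ) : P {ω | X ω = l ∧ Y ω = r}
        = P {ω | X ω + Y ω = l + r} * ((l + r).choose r : ℝ≥0∞) * (2 : ℝ≥0∞)⁻¹ ^ (l + r) := by
      rw [← hbin]
      congr 1
      ext ω
      simp only [mem_ofPred_eq]
      omega
    refine Measure.ext_of_singleton fun ⟨l, r⟩ => ?_
    rw [Measure.map_apply hXY (measurableSet_singleton _),
      Measure.map_apply (hXY.snd.prodMk hXY.fst) (measurableSet_singleton _)]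
    have hXYset : (fun ω => (X ω, Y ω)) ⁻¹' {(l, r)} = {ω | X ω = l ∧ Y ω = r} := by
      ext ω
      simp
    have hYXset : (fun ω => (Y ω, X ω)) ⁻¹' {(l, r)} = {ω | X ω = r ∧ Y ω = l} := by
      ext ω
      simp [and_comm]
    rw [hXYset, hYXset, hpair, hpair, add_comm r l, Nat.choose_symm_add]

theorem hasLaw_sub_swap_of_identDistrib_swap
    (h : IdentDistrib (fun ω => (X ω, Y ω)) (fun ω => (Y ω, X ω)) P P) :
    HasLaw (fun ω => (Y ω : ℤ) - X ω) (P.map fun ω => (X ω : ℤ) - Y ω) P :=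
  have hsub := h.comp (measurable_of_countable fun p : ℕ × ℕ => (p.1 : ℤ) - p.2)
  ⟨hsub.aemeasurable_snd, hsub.map_eq.symm⟩

theorem isNegInvariant_map_sub_of_identDistrib_swap
    (h : IdentDistrib (fun ω => (X ω, Y ω)) (fun ω => (Y ω, X ω)) P P) :
    (P.map fun ω => (X ω : ℤ) - Y ω).IsNegInvariant := ⟨by
  have hmeas : AEMeasurable (fun ω => (X ω : ℤ) - Y ω) P :=
    (h.comp (measurable_of_countable fun p : ℕ × ℕ => (p.1 : ℤ) - p.2)).aemeasurable_fst
  rw [Measure.neg, AEMeasurable.map_map_of_aemeasurable measurable_neg.aemeasurable hmeas]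
  convert (hasLaw_sub_swap_of_identDistrib_swap h).map_eq using 2
  ext ω
  simp⟩

theorem ae_add_eq_zero_of_binomial
    (hbin : ∀ d r : ℕ, P {ω | X ω + Y ω = d ∧ Y ω = r}
      = P {ω | X ω + Y ω = d} * (d.choose r : ℝ≥0∞) * (2 : ℝ≥0∞)⁻¹ ^ d)
    (hXY : P {ω | Y ω < X ω} = 0) :
    ∀ᵐ ω ∂P, X ω + Y ω = 0 := by
  have hdeg (d : ℕ) : P {ω | X ω + Y ω = d + 1} = 0 := by
    have hsub : {ω | X ω + Y ω = d + 1 ∧ Y ω = 0} ⊆ {ω | Y ω < X ω} := by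
      rintro ω ⟨hd, h0⟩
      show Y ω < X ω
      omega
    have := measure_mono_null hsub hXY
    rw [hbin] at this
    simpa using this
  rw [ae_iff]
  refine measure_mono_null (fun ω hω => mem_iUnion.2 ⟨X ω + Y ω - 1, ?_⟩)
    (measure_iUnion_null hdeg)
  simp only [mem_ofPred_eq] at hω ⊢
  omega

end Binomial

theorem sum_Icc_one_eq_sum_range {M : Type*} [AddCommMonoid M] (f : ℤ → M) (n : ℕ) :
    ∑ i ∈ Finset.Icc (1 : ℤ) n, f i = ∑ i ∈ Finset.range n, f (i + 1) := by
  refine Finset.sum_nbij' (fun i => (i - 1).toNat) (fun i => (i : ℤ) + 1) ?_ ?_ ?_ ?_ ?_ <;>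
    intro i hi <;> simp only [Finset.mem_Icc, Finset.mem_range] at hi ⊢
  all_goals first | omega | (congr 1; omega)

theorem iInf_firstPassage_lt_top {l r : ℤ → ℕ}
    (h : ¬ BddAbove (range (partialSum fun i => (l (i + 1) : ℤ) - r (i + 1)))) (j : ℕ) :
    ⨅ (n : ℕ) (_ : 1 ≤ n ∧ (j : ℤ) + 1 ≤ (∑ i ∈ Finset.Icc (1 : ℤ) n, (l i : ℤ))
      - ∑ i ∈ Finset.Icc (1 : ℤ) (n - 1), (r i : ℤ)), (n : ℕ∞) < ⊤ := by
  obtain ⟨_, ⟨n, rfl⟩, hn⟩ := not_bddAbove_iff.1 h j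
  refine (iInf₂_le (n + 1) ⟨by omega, ?_⟩).trans_lt (ENat.natCast_lt_top _)
  rw [sum_Icc_one_eq_sum_range, show ((n + 1 : ℕ) : ℤ) - 1 = n by omega, sum_Icc_one_eq_sum_range,
    Finset.sum_range_succ]
  simp only [partialSum, Finset.sum_sub_distrib] at hn
  omega

/-- `(L_i, R_i)` are the numbers of left- and right-arrows at vertex `i`. In the stepwise (nested)
pairing, the `(j+1)`-st right-arrow at the origin connects to the first vertex `n ≥ 1` with
`∑_{i=1}^n L_i - ∑_{i=1}^{n-1} R_i ≥ j + 1` (value `∞` if there is no such `n`), and symmetrically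
for left-arrows; `N` is the maximum of these edge lengths over the arrows at the origin. -/
theorem SPRD_maximal_edge_finite
    {Ω : Type*} [MeasureSpace Ω] [IsProbabilityMeasure (ℙ : Measure Ω)]
    (L R : ℤ → Ω → ℕ)
    (hmeas : ∀ i, Measurable (fun ω => (L i ω, R i ω)))
    (hindep : iIndepFun (fun i ω => (L i ω, R i ω)) ℙ)
    (hident : ∀ i, IdentDistrib (fun ω => (L i ω, R i ω))
      (fun ω => (L 0 ω, R 0 ω)) ℙ ℙ)
    (hbin : ∀ d r : ℕ,
      ℙ {ω | L 0 ω + R 0 ω = d ∧ R 0 ω = r}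
        = ℙ {ω | L 0 ω + R 0 ω = d} * (d.choose r : ℝ≥0∞) * (2 : ℝ≥0∞)⁻¹ ^ d)
    (Nr Nl : ℕ → Ω → ℕ∞)
    (hNr : ∀ j ω, Nr j ω = ⨅ (n : ℕ) (_ : 1 ≤ n ∧
        ((j : ℤ) + 1) ≤ (∑ i ∈ Finset.Icc (1 : ℤ) (n : ℤ), (L i ω : ℤ))
          - ∑ i ∈ Finset.Icc (1 : ℤ) ((n : ℤ) - 1), (R i ω : ℤ)), (n : ℕ∞))
    (hNl : ∀ j ω, Nl j ω = ⨅ (n : ℕ) (_ : 1 ≤ n ∧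
        ((j : ℤ) + 1) ≤ (∑ i ∈ Finset.Icc (1 : ℤ) (n : ℤ), (R (-i) ω : ℤ))
          - ∑ i ∈ Finset.Icc (1 : ℤ) ((n : ℤ) - 1), (L (-i) ω : ℤ)), (n : ℕ∞))
    (N : Ω → ℕ∞)
    (hN : ∀ ω, N ω = ((Finset.range (R 0 ω)).sup fun j => Nr j ω)
        ⊔ ((Finset.range (L 0 ω)).sup fun j => Nl j ω)) :
    ∀ᵐ ω ∂ℙ, N ω < ⊤ := by
  have hswap := identDistrib_prodMk_swap_of_binomial (hmeas 0) hbin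
  by_cases hdeg : ℙ {ω | R 0 ω < L 0 ω} = 0
  · filter_upwards [ae_add_eq_zero_of_binomial hbin hdeg] with ω hω
    rw [hN, show L 0 ω = 0 by omega, show R 0 ω = 0 by omega]
    simp
  have hsub : Measurable fun p : ℕ × ℕ => (p.1 : ℤ) - p.2 := measurable_of_countable _
  set ν := (ℙ : Measure Ω).map fun ω => (L 0 ω : ℤ) - R 0 ω
  have hlawR : HasLaw (fun ω => (L 0 ω : ℤ) - R 0 ω) ν ℙ :=
    ⟨(hsub.comp (hmeas 0)).aemeasurable, rfl⟩
  have hlawL := hasLaw_sub_swap_of_identDistrib_swap hswap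
  have : IsProbabilityMeasure ν := hlawR.isProbabilityMeasure_iff.1 inferInstance
  have : ν.IsNegInvariant := isNegInvariant_map_sub_of_identDistrib_swap hswap
  have hpos : ν {x | 0 < x} ≠ 0 := by
    rw [← hlawR.measure_eq measurableSet_Ioi]
    simpa using hdeg
  have hright := ae_not_bddAbove_range_partialSum_comp (X := fun i ω => (L i ω, R i ω)) hindep
    hident hsub hlawR hpos (g := fun i : ℕ => (i : ℤ) + 1) fun _ _ h => by simpa using h
  have hleft := ae_not_bddAbove_range_partialSum_comp (X := fun i ω => (L i ω, R i ω)) hindep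
    hident (measurable_of_countable fun p : ℕ × ℕ => (p.2 : ℤ) - p.1) hlawL hpos
    (g := fun i : ℕ => -((i : ℤ) + 1)) fun _ _ h => by simpa using h
  filter_upwards [hright, hleft] with ω hωr hωl
  rw [hN, sup_lt_iff, Finset.sup_lt_iff bot_lt_top, Finset.sup_lt_iff bot_lt_top]
  refine ⟨fun j _ => ?_, fun j _ => ?_⟩
  · rw [hNr]
    exact iInf_firstPassage_lt_top hωr j
  · rw [hNl]
    exact iInf_firstPassage_lt_top (l := fun i => R (-i) ω) (r := fun i => L (-i) ω) hωl j
end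

section
/- Given a locally finite arrow configuration ψ on ℤ (each vertex i has finitely many right-arrows and left-arrows), an edge configuration pairing each right-arrow at some vertex i with a left-arrow at some vertex j > i is nested (contains no two crossing edges, where edges (i,j) and (i',j') cross if i < i' < j < j') if and only if it is obtained by the stepwise pairing algorithm: for n = 1, 2, ..., successively perform all possible connections between vertices at distance n. -/
/-! A nested configuration `c` is matched against the stepwise one by strong induction on the
edge length `d`. Once `c` agrees with the algorithm on all shorter edges, the arrows at `i` and
at `j = i + d` still free for `c` are exactly the residual counts after step `d - 1`, so
`c i j` is at most their minimum. If it were strictly smaller, `i` would still send an edge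
beyond `j` and `j` would still receive one from before `i`, and these two edges cross.
Conversely, after step `e` no arrow at `i'` can still be joined to an arrow at `i' + e`, so
two edges built at later steps cannot cross over the pair `(i', i' + e)`. -/

open scoped ENNReal

/-- The pair of residual (yet unconnected) right- and left-arrow counts after
step `n` of the stepwise pairing algorithm applied to the arrow configuration
with `R i` right-arrows and `L i` left-arrows at each vertex `i ∈ ℤ`: at step
`n`, all possible connections between vertices at distance `n` are performed. -/
def resid (R L : ℤ → ℕ) : ℕ → (ℤ → ℕ) × (ℤ → ℕ)
  | 0 => (R, L)
  | n + 1 =>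
    let p := resid R L n
    (fun i => p.1 i - min (p.1 i) (p.2 (i + ((n : ℤ) + 1))),
     fun j => p.2 j - min (p.1 (j - ((n : ℤ) + 1))) (p.2 j))

/-- The number of edges between the vertices `i` and `i + d` created at step
`d ≥ 1` of the stepwise pairing algorithm. -/
def stepEdges (R L : ℤ → ℕ) (d : ℕ) (i : ℤ) : ℕ :=
  min ((resid R L (d - 1)).1 i) ((resid R L (d - 1)).2 (i + (d : ℤ)))

open Finset

def IsNested (c : ℤ → ℤ → ℕ) : Prop :=
  ∀ i i' j j' : ℤ, i < i' → i' < j → j < j' → c i j ≠ 0 → c i' j' ≠ 0 → False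

section Counting

variable {f : ℤ → ℕ} {N : ℕ}

lemma sum_Icc_le_of_tsum_eq (h : ∑' k, (f k : ℝ≥0∞) = N) (n : ℕ) :
    ∑ k ∈ Icc 1 n, f k ≤ N := by
  have hle := ENNReal.sum_le_tsum (f := fun k => (f k : ℝ≥0∞)) ((Icc 1 n).image (↑))
  rw [h, sum_image (fun _ _ _ _ h => Nat.cast_injective h)] at hle
  exact_mod_cast hle

lemma exists_lt_ne_zero_of_sum_Icc_lt (hpos : ∀ k, f k ≠ 0 → 0 < k)
    (h : ∑' k, (f k : ℝ≥0∞) = N) {n : ℕ} (hlt : ∑ k ∈ Icc 1 n, f k < N) :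
    ∃ k : ℤ, n < k ∧ f k ≠ 0 := by
  by_contra! hnone
  have hsupp : ∀ k ∉ (Icc 1 n).image ((↑) : ℕ → ℤ), (f k : ℝ≥0∞) = 0 := by
    intro k hk
    by_contra hk0
    have hk0 : f k ≠ 0 := by exact_mod_cast hk0
    exact hk (mem_image.2 ⟨k.toNat, by grind, by grind⟩)
  rw [tsum_eq_sum hsupp, sum_image (fun _ _ _ _ h => Nat.cast_injective h)] at h
  exact hlt.ne (by exact_mod_cast h)

end Counting

section Resid

variable (R L : ℤ → ℕ)

lemma stepEdges_succ (n : ℕ) (i : ℤ) :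
    stepEdges R L (n + 1) i = min ((resid R L n).1 i) ((resid R L n).2 (i + ((n : ℤ) + 1))) := by
  simp [stepEdges]

lemma antitone_resid_fst (i : ℤ) : Antitone fun n => (resid R L n).1 i :=
  antitone_nat_of_succ_le fun _ => Nat.sub_le _ _

lemma antitone_resid_snd (j : ℤ) : Antitone fun n => (resid R L n).2 j :=
  antitone_nat_of_succ_le fun _ => Nat.sub_le _ _

lemma min_resid_succ_eq_zero (n : ℕ) (i : ℤ) :
    min ((resid R L (n + 1)).1 i) ((resid R L (n + 1)).2 (i + ((n : ℤ) + 1))) = 0 := by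
  simp only [resid, add_sub_cancel_right]
  omega

lemma resid_fst_add_sum_stepEdges (n : ℕ) (i : ℤ) :
    (resid R L n).1 i + ∑ k ∈ Icc 1 n, stepEdges R L k i = R i := by
  induction n with
  | zero => simp [resid]
  | succ n ih =>
    rw [sum_Icc_succ_top (by omega), stepEdges_succ]
    simp only [resid] at ih ⊢
    omega

lemma resid_snd_add_sum_stepEdges (n : ℕ) (j : ℤ) :
    (resid R L n).2 j + ∑ k ∈ Icc 1 n, stepEdges R L k (j - k) = L j := by
  induction n with
  | zero => simp [resid]
  | succ n ih =>
    rw [sum_Icc_succ_top (by omega), stepEdges_succ]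
    simp only [resid, Nat.cast_add, Nat.cast_one, sub_add_cancel] at ih ⊢
    omega

lemma stepEdges_eq_zero_or_eq_zero {i i' j j' : ℤ} (h₁ : i < i') (h₂ : i' < j) (h₃ : j < j') :
    stepEdges R L (j - i).toNat i = 0 ∨ stepEdges R L (j' - i').toNat i' = 0 := by
  obtain ⟨e, he⟩ : ∃ e : ℕ, j - i' = e + 1 := ⟨(j - i' - 1).toNat, by omega⟩
  have hzero := min_resid_succ_eq_zero R L e i'
  have hfst := antitone_resid_fst R L i' (show e + 1 ≤ (j' - i').toNat - 1 by omega)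
  have hsnd := antitone_resid_snd R L j (show e + 1 ≤ (j - i).toNat - 1 by omega)
  simp only [stepEdges] at hfst hsnd ⊢
  rw [show i + ((j - i).toNat : ℤ) = j by omega]
  rw [show i' + ((e : ℤ) + 1) = j by omega] at hzero
  omega

end Resid

lemma isNested_of_eq_stepEdges {R L : ℤ → ℕ} {c : ℤ → ℤ → ℕ}
    (h : ∀ i j : ℤ, i < j → c i j = stepEdges R L (j - i).toNat i) : IsNested c := by
  intro i i' j j' h₁ h₂ h₃ hc hc'
  rw [h i j (by omega)] at hc
  rw [h i' j' (by omega)] at hc'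
  exact (stepEdges_eq_zero_or_eq_zero R L h₁ h₂ h₃).elim hc hc'

section Configuration

variable {R L : ℤ → ℕ} {c : ℤ → ℤ → ℕ}

lemma tsum_row_eq (hR : ∀ i : ℤ, ∑' j : ℤ, (c i j : ℝ≥0∞) = (R i : ℝ≥0∞)) (i : ℤ) :
    ∑' k, (c i (i + k) : ℝ≥0∞) = R i := by
  rw [← hR i]
  exact (Equiv.addLeft i).tsum_eq fun j => (c i j : ℝ≥0∞)

lemma tsum_col_eq (hL : ∀ j : ℤ, ∑' i : ℤ, (c i j : ℝ≥0∞) = (L j : ℝ≥0∞)) (j : ℤ) :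
    ∑' k, (c (j - k) j : ℝ≥0∞) = L j := by
  rw [← hL j]
  exact (Equiv.subLeft j).tsum_eq fun i => (c i j : ℝ≥0∞)

lemma IsNested.sum_row_eq_or_sum_col_eq (hc : IsNested c)
    (hsupp : ∀ i j : ℤ, c i j ≠ 0 → i < j)
    (hR : ∀ i : ℤ, ∑' j : ℤ, (c i j : ℝ≥0∞) = (R i : ℝ≥0∞))
    (hL : ∀ j : ℤ, ∑' i : ℤ, (c i j : ℝ≥0∞) = (L j : ℝ≥0∞)) (i j : ℤ) {n : ℕ} (hn : 0 < n)
    (hj : j = i + n) :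
    ∑ k ∈ Icc 1 n, c i (i + k) = R i ∨ ∑ k ∈ Icc 1 n, c (j - k) j = L j := by
  by_contra! hne
  have hrow_lt := (sum_Icc_le_of_tsum_eq (tsum_row_eq hR i) n).lt_of_ne hne.1
  have hcol_lt := (sum_Icc_le_of_tsum_eq (tsum_col_eq hL j) n).lt_of_ne hne.2
  obtain ⟨k, hk, hck⟩ := exists_lt_ne_zero_of_sum_Icc_lt
    (fun k hk => by linarith [hsupp _ _ hk]) (tsum_row_eq hR i) hrow_lt
  obtain ⟨k', hk', hck'⟩ := exists_lt_ne_zero_of_sum_Icc_lt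
    (fun k hk => by linarith [hsupp _ _ hk]) (tsum_col_eq hL j) hcol_lt
  exact hc (j - k') i j (i + k) (by omega) (by omega) (by omega) hck' hck

lemma IsNested.eq_stepEdges (hc : IsNested c)
    (hsupp : ∀ i j : ℤ, c i j ≠ 0 → i < j)
    (hR : ∀ i : ℤ, ∑' j : ℤ, (c i j : ℝ≥0∞) = (R i : ℝ≥0∞))
    (hL : ∀ j : ℤ, ∑' i : ℤ, (c i j : ℝ≥0∞) = (L j : ℝ≥0∞)) (d : ℕ) (hd : 1 ≤ d) (i : ℤ) :
    c i (i + d) = stepEdges R L d i := by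
  induction d using Nat.strong_induction_on generalizing i with
  | _ d ih =>
  obtain ⟨e, rfl⟩ : ∃ e, d = e + 1 := ⟨d - 1, by omega⟩
  set j := i + ((e + 1 : ℕ) : ℤ)
  have hrow_short : ∑ k ∈ Icc 1 e, c i (i + k) = ∑ k ∈ Icc 1 e, stepEdges R L k i :=
    sum_congr rfl fun k hk => ih k (by grind) (by grind) i
  have hcol_short : ∑ k ∈ Icc 1 e, c (j - k) j = ∑ k ∈ Icc 1 e, stepEdges R L k (j - k) :=
    sum_congr rfl fun k hk => by rw [← ih k (by grind) (by grind), sub_add_cancel]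
  have hrow_split : ∑ k ∈ Icc 1 (e + 1), c i (i + k) = ∑ k ∈ Icc 1 e, c i (i + k) + c i j :=
    sum_Icc_succ_top (by omega) _
  have hcol_split : ∑ k ∈ Icc 1 (e + 1), c (j - k) j = ∑ k ∈ Icc 1 e, c (j - k) j + c i j := by
    rw [sum_Icc_succ_top (by omega), show j - ((e + 1 : ℕ) : ℤ) = i by omega]
  have hrow_le := sum_Icc_le_of_tsum_eq (tsum_row_eq hR i) (e + 1)
  have hcol_le := sum_Icc_le_of_tsum_eq (tsum_col_eq hL j) (e + 1)
  have hfull := hc.sum_row_eq_or_sum_col_eq hsupp hR hL i j (n := e + 1) (by omega) rfl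
  have hresid_fst := resid_fst_add_sum_stepEdges R L e i
  have hresid_snd := resid_snd_add_sum_stepEdges R L e j
  rw [stepEdges_succ, show i + ((e : ℤ) + 1) = j by simp [j]]
  omega

end Configuration

/-- Section 5, uniqueness of the nested configuration: given an arrow
configuration on `ℤ` (with `R i` right-arrows and `L i` left-arrows at vertex
`i`), an edge configuration `c` (where `c i j` is the number of edges from `i`
to `j > i`) pairing each right-arrow with a left-arrow to its right and
exhausting all arrows is nested — contains no two crossing edges `(i,j)`,
`(i',j')` with `i < i' < j < j'` — if and only if it is the configuration
obtained by the stepwise pairing algorithm. -/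
theorem nested_iff_stepwise (R L : ℤ → ℕ) (c : ℤ → ℤ → ℕ)
    (hsupp : ∀ i j : ℤ, c i j ≠ 0 → i < j)
    (hR : ∀ i : ℤ, ∑' j : ℤ, (c i j : ℝ≥0∞) = (R i : ℝ≥0∞))
    (hL : ∀ j : ℤ, ∑' i : ℤ, (c i j : ℝ≥0∞) = (L j : ℝ≥0∞)) :
    (∀ i i' j j' : ℤ, i < i' → i' < j → j < j' → c i j ≠ 0 → c i' j' ≠ 0 → False)
      ↔ ∀ i j : ℤ, i < j → c i j = stepEdges R L (j - i).toNat i := by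
  refine ⟨fun hc i j hij => ?_, isNested_of_eq_stepEdges⟩
  have h := IsNested.eq_stepEdges hc hsupp hR hL (j - i).toNat (by omega) i
  rwa [show i + ((j - i).toNat : ℤ) = j by omega] at h
end
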